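/- For every vertex x, the function δ_x satisfies the identity δ_x = c(x)·v_x − Σ_{y~x} c_{xy}·v_y in the energy Hilbert space, where v_z denotes the dipole with respect to a fixed base vertex o; consequently δ_x lies in the closed span of the dipoles {v_z : z ∈ V}. -/

import Mathlib

/-!
Pairing with `δ_x` turns the energy form into the Laplacian at `x`, so the reproducing property
gives `δ_x(z) - δ_x(o) = Δv_z(x) = Σ_y c_{xy} (v_z(x) - v_z(y))`. The reproducing property also
makes the kernel `v_a(b) - v_a(o)` symmetric in `a, b`; swapping the arguments of `v_z(x)` and
`v_z(y)` turns the Laplacian into `c(x) v_x(z) - Σ_y c_{xy} v_y(z)` plus a term independent of `z`.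
-/

open scoped BigOperators

/-- Energy form `E(u,v) = (1/2) Σ_{x,y} c_{xy}(u(x)-u(y))(v(x)-v(y))`. -/
noncomputable def energy {V : Type*} (c : V → V → ℝ) (u v : V → ℝ) : ℝ :=
  (1 / 2) * ∑' p : V × V, c p.1 p.2 * (u p.1 - u p.2) * (v p.1 - v p.2)

/-- `u` has finite energy. -/
def FiniteEnergy {V : Type*} (c : V → V → ℝ) (u : V → ℝ) : Prop :=
  Summable fun p : V × V => c p.1 p.2 * (u p.1 - u p.2) * (u p.1 - u p.2)

/-- Graph Laplacian `(Δu)(x) = Σ_y c_{xy}(u(x)-u(y))`. -/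
noncomputable def lap {V : Type*} (c : V → V → ℝ) (u : V → ℝ) (x : V) : ℝ :=
  ∑' y, c x y * (u x - u y)

/-- Total conductance `c(x) = Σ_y c_{xy}`. -/
noncomputable def cTot {V : Type*} (c : V → V → ℝ) (x : V) : ℝ := ∑' y, c x y

/-- Dirac delta at `x`. -/
noncomputable def delta {V : Type*} [DecidableEq V] (x : V) : V → ℝ :=
  fun z => if z = x then 1 else 0

/-- Connectedness: any two vertices are joined by a finite path of positive-conductance edges. -/
def GraphConnected {V : Type*} (c : V → V → ℝ) : Prop :=
  ∀ x y : V, ∃ (n : ℕ) (p : ℕ → V), p 0 = x ∧ p n = y ∧ ∀ i < n, 0 < c (p i) (p (i + 1))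

section HasSumProd

variable {α β M : Type*} [DecidableEq α] [AddCommMonoid M] [TopologicalSpace M]

theorem HasSum.ite_fst_eq {f : β → M} {s : M} (hf : HasSum f s) (a : α) :
    HasSum (fun p : α × β => if p.1 = a then f p.2 else 0) s :=
  ((Prod.mk_right_injective a).hasSum_iff (by rintro ⟨b, y⟩ hp; grind)).mp
    (by simpa [Function.comp_def])

theorem HasSum.ite_snd_eq {f : β → M} {s : M} (hf : HasSum f s) (a : α) :
    HasSum (fun p : β × α => if p.2 = a then f p.1 else 0) s :=
  ((Prod.mk_left_injective a).hasSum_iff (by rintro ⟨y, b⟩ hp; grind)).mp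
    (by simpa [Function.comp_def])

end HasSumProd

section Energy

variable {V : Type*} {c : V → V → ℝ} {x : V}

theorem energy_comm (u w : V → ℝ) : energy c u w = energy c w u := by
  unfold energy
  congr 1
  exact tsum_congr fun p => by ring

theorem cTot_eq_sum (hfin : (Function.support (c x)).Finite) :
    cTot c x = ∑ y ∈ hfin.toFinset, c x y :=
  tsum_eq_sum' (by simp)

theorem lap_eq_sum (hfin : (Function.support (c x)).Finite) (u : V → ℝ) :
    lap c u x = ∑ y ∈ hfin.toFinset, c x y * (u x - u y) :=
  tsum_eq_sum' (by simp)

theorem hasSum_lap (hfin : (Function.support (c x)).Finite) (u : V → ℝ) :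
    HasSum (fun y => c x y * (u x - u y)) (lap c u x) :=
  (summable_of_hasFiniteSupport (hfin.subset (Function.support_mul_subset_left _ _))).hasSum

variable [DecidableEq V]

theorem hasSum_energy_summand_delta (hsym : ∀ x y, c x y = c y x)
    (hfin : (Function.support (c x)).Finite) (u : V → ℝ) :
    HasSum (fun p : V × V => c p.1 p.2 * (u p.1 - u p.2) * (delta x p.1 - delta x p.2))
      (2 * lap c u x) := by
  convert ((hasSum_lap hfin u).ite_fst_eq x).add ((hasSum_lap hfin u).ite_snd_eq x) using 1
  · funext ⟨a, b⟩
    by_cases ha : a = x <;> by_cases hb : b = x <;> simp [delta, ha, hb, hsym a x]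
    ring
  · ring

theorem finiteEnergy_delta (hsym : ∀ x y, c x y = c y x)
    (hfin : (Function.support (c x)).Finite) : FiniteEnergy c (delta x) :=
  (hasSum_energy_summand_delta hsym hfin (delta x)).summable

theorem energy_delta (hsym : ∀ x y, c x y = c y x)
    (hfin : (Function.support (c x)).Finite) (u : V → ℝ) :
    energy c u (delta x) = lap c u x := by
  rw [energy, (hasSum_energy_summand_delta hsym hfin u).tsum_eq]
  ring

end Energy

theorem dipole_sub_comm {V : Type*} {c : V → V → ℝ} {o : V} {v : V → V → ℝ}
    (hvfin : ∀ z, FiniteEnergy c (v z))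
    (hrep : ∀ z (u : V → ℝ), FiniteEnergy c u → energy c (v z) u = u z - u o) (a b : V) :
    v a b - v a o = v b a - v b o := by
  rw [← hrep b (v a) (hvfin a), energy_comm, hrep a (v b) (hvfin b)]

theorem delta_in_span_of_dipoles_general {V : Type*} [DecidableEq V] (c : V → V → ℝ)
    (hsym : ∀ x y, c x y = c y x)
    (hloc : ∀ x, (Function.support (c x)).Finite)
    (o : V) (v : V → (V → ℝ))
    (hvfin : ∀ z, FiniteEnergy c (v z))
    (hrep : ∀ z (u : V → ℝ), FiniteEnergy c u → energy c (v z) u = u z - u o)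
    (x : V) :
    ∃ k : ℝ, ∀ z : V,
      delta x z = cTot c x * v x z - (∑ y ∈ (hloc x).toFinset, c x y * v y z) + k := by
  set F := (hloc x).toFinset
  refine ⟨delta x o - cTot c x * v x o + ∑ y ∈ F, c x y * v y o, fun z => ?_⟩
  have hlap := hrep z (delta x) (finiteEnergy_delta hsym (hloc x))
  have hswap : ∀ y, c x y * (v z x - v z y) =
      c x y * (v x z - v x o) - (c x y * v y z - c x y * v y o) := fun y => by
    linear_combination c x y * (dipole_sub_comm hvfin hrep z x - dipole_sub_comm hvfin hrep z y)
  rw [energy_delta hsym (hloc x), lap_eq_sum (hloc x), Finset.sum_congr rfl fun y _ => hswap y,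
    Finset.sum_sub_distrib, Finset.sum_sub_distrib, ← Finset.sum_mul, ← cTot_eq_sum] at hlap
  linarith

/-- in the energy Hilbert space, `δ_x = c(x)·v_x - Σ_{y~x} c_{xy} v_y`,
i.e. pointwise up to an additive constant; consequently `δ_x` lies in the
(closed) span of the dipoles `{v_z}`. -/
theorem delta_in_span_of_dipoles {V : Type*} [Countable V] [DecidableEq V] (c : V → V → ℝ)
    (hsym : ∀ x y, c x y = c y x) (hnn : ∀ x y, 0 ≤ c x y)
    (hloop : ∀ x, c x x = 0)
    (hloc : ∀ x, (Function.support (c x)).Finite)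
    (hconn : GraphConnected c)
    (o : V) (v : V → (V → ℝ))
    (hvfin : ∀ z, FiniteEnergy c (v z))
    (hrep : ∀ z (u : V → ℝ), FiniteEnergy c u → energy c (v z) u = u z - u o)
    (x : V) :
    ∃ k : ℝ, ∀ z : V,
      delta x z = cTot c x * v x z - (∑ y ∈ (hloc x).toFinset, c x y * v y z) + k :=
  delta_in_span_of_dipoles_general c hsym hloc o v hvfin hrep x
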